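/- arXiv:2505.15175 — 2 statements merged into one kernel-verified Lean document; each statement's English description precedes it below -/
import Mathlib

section
/- Fix 0 < c < 1, θ ∈ [0,1] and V ≥ 0, set τ² = V²·(θ/2)·(1 − θ/2), and for λ > 0 let σ²(λ) = (m̃(−λ) − λ·m̃′(−λ))·[(1 − θ²) + ((1 + c⁻¹τ²)/(1 + c⁻¹τ²·(1 − λ·m̃(−λ)))² − 1)·θ(1−θ)²/(2−θ)]. Then as λ → 0⁺, σ²(λ) → (c/(1−c))·[(1 − θ²) + ((1 + c⁻¹τ²)/(1 + τ²)² − 1)·θ(1−θ)²/(2−θ)]. -/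
open Filter Topology

/-- Marčenko–Pastur Stieltjes transform (for real `z < 0`). -/
noncomputable def mMP (c z : ℝ) : ℝ :=
  (1 - c - z - Real.sqrt ((1 - c - z) ^ 2 - 4 * c * z)) / (2 * c * z)

/-- Companion (Gram-side) Stieltjes transform. -/
noncomputable def mTildeMP (c z : ℝ) : ℝ := c * mMP c z - (1 - c) / z

/-!
At `z = -λ` the discriminant of `mMP` is `(1 - c + λ)² + 4cλ`; with `s(λ)` its square root,
`λ·m̃(-λ) = (s + 1 - c - λ)/2`, and `m̃(-λ) - λ·m̃'(-λ)` is the `λ`-derivative of this,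
`(-1 + (1 + c + λ)/s)/2`. As `λ → 0⁺`, `s → 1 - c`, so `1 - λ·m̃(-λ) → c` and
`m̃(-λ) - λ·m̃'(-λ) → c/(1 - c)`; the bracket is continuous in `1 - λ·m̃(-λ)` at `c`,
where `c⁻¹τ²·c = τ²`.
-/

/-- The square root of the discriminant of `mMP c (-lam)`. -/
noncomputable def mpSqrtDisc (c lam : ℝ) : ℝ := Real.sqrt ((1 - c + lam) ^ 2 + 4 * c * lam)

lemma mul_mTildeMP_neg {c lam : ℝ} (hc : c ≠ 0) (hlam : lam ≠ 0) :
    lam * mTildeMP c (-lam) = (mpSqrtDisc c lam + 1 - c - lam) / 2 := by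
  have hdisc : (1 - c - -lam) ^ 2 - 4 * c * -lam = (1 - c + lam) ^ 2 + 4 * c * lam := by ring
  rw [mTildeMP, mMP, hdisc, ← mpSqrtDisc]
  field_simp
  ring

lemma mpSqrtDisc_pos {c lam : ℝ} (hc : 0 < c) (hlam : 0 < lam) : 0 < mpSqrtDisc c lam :=
  Real.sqrt_pos.mpr (by nlinarith [sq_nonneg (1 - c + lam)])

lemma hasDerivAt_mpSqrtDisc {c lam : ℝ} (hc : 0 < c) (hlam : 0 < lam) :
    HasDerivAt (mpSqrtDisc c) ((1 + c + lam) / mpSqrtDisc c lam) lam := by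
  have hdisc : HasDerivAt (fun l => (1 - c + l) ^ 2 + 4 * c * l) (2 * (1 + c + lam)) lam := by
    have := (((hasDerivAt_id lam).const_add (1 - c)).pow 2).add
      ((hasDerivAt_id lam).const_mul (4 * c))
    exact this.congr_deriv (by simp only [id, mul_one]; ring)
  have hpos := mpSqrtDisc_pos hc hlam
  refine (hdisc.sqrt (Real.sqrt_pos.mp hpos).ne').congr_deriv ?_
  rw [← mpSqrtDisc]
  field_simp

@[fun_prop]
lemma continuous_mpSqrtDisc (c : ℝ) : Continuous (mpSqrtDisc c) := by
  unfold mpSqrtDisc; fun_prop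

lemma mpSqrtDisc_zero {c : ℝ} (hc : c ≤ 1) : mpSqrtDisc c 0 = 1 - c := by
  simp [mpSqrtDisc, Real.sqrt_sq (sub_nonneg.mpr hc)]

lemma differentiableAt_mTildeMP {c z : ℝ} (hc : 0 < c) (hz : z < 0) :
    DifferentiableAt ℝ (mTildeMP c) z := by
  have hdisc : (1 - c - z) ^ 2 - 4 * c * z ≠ 0 := by nlinarith [sq_nonneg (1 - c - z)]
  have h2cz : 2 * c * z ≠ 0 := by nlinarith
  unfold mTildeMP mMP
  fun_prop (disch := first | exact hdisc | exact h2cz | exact hz.ne)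

lemma hasDerivAt_mul_mTildeMP_neg {c lam : ℝ} (hc : 0 < c) (hlam : 0 < lam) :
    HasDerivAt (fun l => l * mTildeMP c (-l)) ((-1 + (1 + c + lam) / mpSqrtDisc c lam) / 2) lam := by
  have hclosed : (fun l => l * mTildeMP c (-l)) =ᶠ[𝓝 lam]
      fun l => (mpSqrtDisc c l + 1 - c - l) / 2 := by
    filter_upwards [eventually_ne_nhds hlam.ne'] with l hl
    exact mul_mTildeMP_neg hc.ne' hl
  have hderiv : HasDerivAt (fun l => (mpSqrtDisc c l + 1 - c - l) / 2)
      (((1 + c + lam) / mpSqrtDisc c lam - 1) / 2) lam :=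
    ((((hasDerivAt_mpSqrtDisc hc hlam).add_const 1).sub_const c).sub (hasDerivAt_id' lam)).div_const 2
  exact (hderiv.congr_of_eventuallyEq hclosed).congr_deriv (by ring)

lemma mTildeMP_neg_sub_mul_deriv {c lam : ℝ} (hc : 0 < c) (hlam : 0 < lam) :
    mTildeMP c (-lam) - lam * deriv (mTildeMP c) (-lam) =
      (-1 + (1 + c + lam) / mpSqrtDisc c lam) / 2 := by
  have hm := (differentiableAt_mTildeMP hc (neg_lt_zero.mpr hlam)).hasDerivAt
  have hprod : HasDerivAt (fun l => l * mTildeMP c (-l))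
      (1 * mTildeMP c (-lam) + lam * (deriv (mTildeMP c) (-lam) * -1)) lam :=
    (hasDerivAt_id lam).mul (hm.comp lam (hasDerivAt_neg' lam))
  rw [(hasDerivAt_mul_mTildeMP_neg hc hlam).unique hprod]
  ring

lemma tendsto_one_sub_mul_mTildeMP_neg {c : ℝ} (hc0 : c ≠ 0) (hc1 : c ≤ 1) :
    Tendsto (fun lam => 1 - lam * mTildeMP c (-lam)) (𝓝[≠] 0) (𝓝 c) := by
  have hlim : Tendsto (fun lam => 1 - (mpSqrtDisc c lam + 1 - c - lam) / 2) (𝓝 0) (𝓝 c) := by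
    have hcont : Continuous fun lam => 1 - (mpSqrtDisc c lam + 1 - c - lam) / 2 := by fun_prop
    convert hcont.tendsto 0 using 2
    rw [mpSqrtDisc_zero hc1]
    ring
  refine (hlim.mono_left nhdsWithin_le_nhds).congr' ?_
  filter_upwards [self_mem_nhdsWithin] with lam hlam
  rw [mul_mTildeMP_neg hc0 hlam]

lemma tendsto_mTildeMP_neg_sub_mul_deriv {c : ℝ} (hc0 : 0 < c) (hc1 : c < 1) :
    Tendsto (fun lam => mTildeMP c (-lam) - lam * deriv (mTildeMP c) (-lam)) (𝓝[>] 0)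
      (𝓝 (c / (1 - c))) := by
  have hroot : mpSqrtDisc c 0 = 1 - c := mpSqrtDisc_zero hc1.le
  have hroot_ne : mpSqrtDisc c 0 ≠ 0 := by rw [hroot]; linarith
  have hlim : Tendsto (fun lam => (-1 + (1 + c + lam) / mpSqrtDisc c lam) / 2) (𝓝 0)
      (𝓝 (c / (1 - c))) := by
    have hcont : ContinuousAt (fun lam => (-1 + (1 + c + lam) / mpSqrtDisc c lam) / 2) 0 := by
      fun_prop (disch := exact hroot_ne)
    convert hcont.tendsto using 2
    have h1c : 1 - c ≠ 0 := by linarith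
    rw [hroot]
    field_simp
    ring
  refine (hlim.mono_left nhdsWithin_le_nhds).congr' ?_
  filter_upwards [self_mem_nhdsWithin] with lam hlam
  rw [mTildeMP_neg_sub_mul_deriv hc0 hlam]

theorem sigma_ridgeless_limit_general (c θ V : ℝ) (hc0 : 0 < c) (hc1 : c < 1)
    (hθ : θ ∈ Set.Icc (0 : ℝ) 1) :
    let τsq : ℝ := V ^ 2 * (θ / 2) * (1 - θ / 2)
    Tendsto (fun lam : ℝ =>
        (mTildeMP c (-lam) - lam * deriv (mTildeMP c) (-lam)) *
          ((1 - θ ^ 2) +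
            ((1 + c⁻¹ * τsq) / (1 + c⁻¹ * τsq * (1 - lam * mTildeMP c (-lam))) ^ 2 - 1) *
              (θ * (1 - θ) ^ 2 / (2 - θ))))
      (𝓝[>] 0)
      (𝓝 ((c / (1 - c)) *
        ((1 - θ ^ 2) +
          ((1 + c⁻¹ * τsq) / (1 + τsq) ^ 2 - 1) * (θ * (1 - θ) ^ 2 / (2 - θ))))) := by
  intro τsq
  have hτ : 0 ≤ τsq :=
    mul_nonneg (mul_nonneg (sq_nonneg V) (by linarith [hθ.1])) (by linarith [hθ.2])
  have hc_τ : c⁻¹ * τsq * c = τsq := by field_simp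
  have hB : Tendsto (fun lam => 1 - lam * mTildeMP c (-lam)) (𝓝[>] 0) (𝓝 c) :=
    (tendsto_one_sub_mul_mTildeMP_neg hc0.ne' hc1.le).mono_left (nhdsGT_le_nhdsNE 0)
  have hden : 1 + c⁻¹ * τsq * c ≠ 0 := by rw [hc_τ]; positivity
  have hbracket : ContinuousAt (fun b => (1 - θ ^ 2) +
      ((1 + c⁻¹ * τsq) / (1 + c⁻¹ * τsq * b) ^ 2 - 1) * (θ * (1 - θ) ^ 2 / (2 - θ))) c := by
    fun_prop (disch := exact pow_ne_zero 2 hden)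
  simpa only [Function.comp_def, hc_τ] using
    (tendsto_mTildeMP_neg_sub_mul_deriv hc0 hc1).mul (hbracket.tendsto.comp hB)

/-- the ridgeless limit of the variance `σ²(λ)`:
with `τ² = V²(θ/2)(1 − θ/2)`, as `λ → 0⁺`,
`σ²(λ) → (c/(1−c))[(1 − θ²) + ((1 + c⁻¹τ²)/(1 + τ²)² − 1)·θ(1−θ)²/(2−θ)]`. -/
theorem sigma_ridgeless_limit (c θ V : ℝ) (hc0 : 0 < c) (hc1 : c < 1)
    (hθ : θ ∈ Set.Icc (0 : ℝ) 1) (hV : 0 ≤ V) :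
    let τsq : ℝ := V ^ 2 * (θ / 2) * (1 - θ / 2)
    Tendsto (fun lam : ℝ =>
        (mTildeMP c (-lam) - lam * deriv (mTildeMP c) (-lam)) *
          ((1 - θ ^ 2) +
            ((1 + c⁻¹ * τsq) / (1 + c⁻¹ * τsq * (1 - lam * mTildeMP c (-lam))) ^ 2 - 1) *
              (θ * (1 - θ) ^ 2 / (2 - θ))))
      (𝓝[>] 0)
      (𝓝 ((c / (1 - c)) *
        ((1 - θ ^ 2) +
          ((1 + c⁻¹ * τsq) / (1 + τsq) ^ 2 - 1) * (θ * (1 - θ) ^ 2 / (2 - θ))))) :=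
  sigma_ridgeless_limit_general c θ V hc0 hc1 hθ
end

section
/- In the label-and-indicator model with θ ∈ (0,1), as n → ∞ one has, almost surely: (1/n)·‖w̃‖² → 1 − θ², and (1/n)·(w̃ᵀr)²/‖r‖² → θ(1−θ)²/(2−θ) (with ‖r‖ > 0 for all sufficiently large n almost surely). -/
/-!
Each of the three statistics is an average over `i` of `g (yᵢ, uᵢ)` for a fixed function `g`,
so row `n` consists of independent bounded summands with the common mean
`(g (1, 0) + g (-1, 0)) / 2 + θ / 2 * (g (-1, 1) - g (-1, 0))`, the law of `(yᵢ, uᵢ)` putting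
masses `1/2`, `θ/2`, `(1 - θ)/2` on `(1, 0)`, `(-1, 1)`, `(-1, 0)`. The rows change with `n`, so
the classical strong law does not apply; instead Hoeffding's inequality makes
`P(|average - mean| ≥ ε)` decay geometrically in `n`, and Borel–Cantelli gives almost sure
convergence. The ratio then converges to `(θ/2 - θ²/2)² / (θ/2 - θ²/4) = θ(1 - θ)²/(2 - θ)`.
-/

open MeasureTheory ProbabilityTheory Filter Topology

open Real Finset

theorem tendsto_inv_mul_sq_div {a b : ℕ → ℝ} {α β : ℝ}
    (ha : Tendsto (fun n : ℕ => (n : ℝ)⁻¹ * a n) atTop (𝓝 α))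
    (hb : Tendsto (fun n : ℕ => (n : ℝ)⁻¹ * b n) atTop (𝓝 β)) (hβ : β ≠ 0) :
    Tendsto (fun n : ℕ => (n : ℝ)⁻¹ * a n ^ 2 / b n) atTop (𝓝 (α ^ 2 / β)) := by
  refine ((ha.pow 2).div hb hβ).congr' ?_
  filter_upwards [eventually_gt_atTop 0] with n hn
  have hn' : (n : ℝ) ≠ 0 := Nat.cast_ne_zero.2 hn.ne'
  change ((n : ℝ)⁻¹ * a n) ^ 2 / ((n : ℝ)⁻¹ * b n) = _
  field_simp

section

variable {Ω : Type*} [MeasurableSpace Ω] {μ : Measure Ω} [IsProbabilityMeasure μ]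

theorem measureReal_abs_sum_sub_integral_ge_le_of_iIndepFun {ι : Type*} {X : ι → Ω → ℝ}
    (hind : iIndepFun X μ) (hm : ∀ i, AEMeasurable (X i) μ) {a b : ℝ}
    (hb : ∀ i, ∀ᵐ ω ∂μ, X i ω ∈ Set.Icc a b) (s : Finset ι) {ε : ℝ} (hε : 0 ≤ ε) :
    μ.real {ω | ε ≤ |∑ i ∈ s, (X i ω - μ[X i])|}
      ≤ 2 * exp (-2 * ε ^ 2 / (#s * (b - a) ^ 2)) := by
  have hS := HasSubgaussianMGF.sum_of_iIndepFun (s := s) (X := fun i ω => X i ω - μ[X i])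
    (hind.comp (fun i (t : ℝ) => t - ∫ ω, X i ω ∂μ) fun i => measurable_id.sub_const _)
    fun i _ => hasSubgaussianMGF_of_mem_Icc (hm i) (hb i)
  have hexp : -ε ^ 2 / (2 * ↑(∑ i ∈ s, (‖b - a‖₊ / 2) ^ 2 : NNReal))
      = -2 * ε ^ 2 / (#s * (b - a) ^ 2) := by
    push_cast
    rw [Finset.sum_const, nsmul_eq_mul, Real.norm_eq_abs, div_pow, sq_abs]
    generalize (b - a) ^ 2 = d
    ring
  have hunion : {ω | ε ≤ |∑ i ∈ s, (X i ω - μ[X i])|}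
      = {ω | ε ≤ ∑ i ∈ s, (X i ω - μ[X i])} ∪ {ω | ε ≤ -∑ i ∈ s, (X i ω - μ[X i])} := by
    ext ω
    simp only [Set.mem_ofPred_eq, Set.mem_union, le_abs]
  calc μ.real {ω | ε ≤ |∑ i ∈ s, (X i ω - μ[X i])|}
      ≤ μ.real {ω | ε ≤ ∑ i ∈ s, (X i ω - μ[X i])}
        + μ.real {ω | ε ≤ -∑ i ∈ s, (X i ω - μ[X i])} := hunion ▸ measureReal_union_le _ _
    _ ≤ 2 * exp (-2 * ε ^ 2 / (#s * (b - a) ^ 2)) := by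
      rw [two_mul, ← hexp]
      exact add_le_add (hS.measure_ge_le hε) (hS.neg.measure_ge_le hε)

section TriangularArray

variable {X : (n : ℕ) → Fin n → Ω → ℝ} {a b m : ℝ}

theorem ae_eventually_abs_inv_mul_sum_sub_lt (hind : ∀ n, iIndepFun (X n) μ)
    (hm : ∀ n i, AEMeasurable (X n i) μ) (hb : ∀ n i, ∀ᵐ ω ∂μ, X n i ω ∈ Set.Icc a b)
    (hmean : ∀ n i, μ[X n i] = m) {ε : ℝ} (hε : 0 < ε) :
    ∀ᵐ ω ∂μ, ∀ᶠ n : ℕ in atTop, |(n : ℝ)⁻¹ * ∑ i, X n i ω - m| < ε := by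
  -- widening `[a, b]` keeps the Hoeffding exponent away from `-ε ^ 2 / 0 = 0`
  obtain ⟨c, hac, hbc⟩ : ∃ c, a + 1 ≤ c ∧ b ≤ c :=
    ⟨max b (a + 1), le_max_right _ _, le_max_left _ _⟩
  have hc : 0 < (c - a) ^ 2 := pow_pos (by linarith) 2
  set r := exp (-2 * ε ^ 2 / (c - a) ^ 2)
  have hr : r < 1 := exp_lt_one_iff.2 (div_neg_of_neg_of_pos (by nlinarith) hc)
  have htail (n : ℕ) : μ.real {ω | n * ε ≤ |∑ i, (X n i ω - m)|} ≤ 2 * r ^ n := by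
    have h := measureReal_abs_sum_sub_integral_ge_le_of_iIndepFun (hind n) (hm n)
      (fun i => (hb n i).mono fun ω h => Set.Icc_subset_Icc_right hbc h)
      univ (by positivity : (0 : ℝ) ≤ n * ε)
    simp only [hmean, card_univ, Fintype.card_fin] at h
    refine h.trans_eq ?_
    rw [← exp_nat_mul]
    rcases n.eq_zero_or_pos with rfl | hn
    · simp
    · congr 2
      field_simp
  have hsum : Summable fun n : ℕ => μ.real {ω | n * ε ≤ |∑ i, (X n i ω - m)|} :=
    .of_nonneg_of_le (fun _ => measureReal_nonneg) htail
      ((summable_geometric_of_lt_one (exp_pos _).le hr).mul_left 2)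
  have hfin : ∑' n : ℕ, μ {ω | n * ε ≤ |∑ i, (X n i ω - m)|} ≠ ⊤ := by
    convert hsum.tsum_ofReal_ne_top using 3
    exact (ofReal_measureReal).symm
  filter_upwards [ae_eventually_notMem hfin] with ω hω
  filter_upwards [hω, eventually_gt_atTop 0] with n hn hn0
  have hn0' : (0 : ℝ) < n := Nat.cast_pos.2 hn0
  have hcenter : (n : ℝ)⁻¹ * ∑ i, X n i ω - m = (n : ℝ)⁻¹ * ∑ i, (X n i ω - m) := by
    rw [sum_sub_distrib, sum_const, card_univ, Fintype.card_fin, nsmul_eq_mul]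
    field_simp
  rw [hcenter, abs_mul, abs_inv, abs_of_pos hn0', inv_mul_lt_iff₀ hn0']
  simpa only [Set.mem_ofPred_eq, not_le] using hn

theorem ae_tendsto_inv_mul_sum_of_iIndepFun (hind : ∀ n, iIndepFun (X n) μ)
    (hm : ∀ n i, AEMeasurable (X n i) μ) (hb : ∀ n i, ∀ᵐ ω ∂μ, X n i ω ∈ Set.Icc a b)
    (hmean : ∀ n i, μ[X n i] = m) :
    ∀ᵐ ω ∂μ, Tendsto (fun n : ℕ => (n : ℝ)⁻¹ * ∑ i, X n i ω) atTop (𝓝 m) := by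
  have h := ae_all_iff.2 fun k : ℕ =>
    ae_eventually_abs_inv_mul_sum_sub_lt hind hm hb hmean (Nat.one_div_pos_of_nat (n := k))
  filter_upwards [h] with ω hω
  refine Metric.tendsto_nhds.2 fun ε hε => ?_
  obtain ⟨k, hk⟩ := exists_nat_one_div_lt hε
  exact (hω k).mono fun n hn => (Real.dist_eq _ _).trans_lt (hn.trans hk)

end TriangularArray

theorem integral_comp_label_indicator {θ : ℝ} (hθ : 0 ≤ θ) {Y U : Ω → ℝ}
    (hY : Measurable Y) (hU : Measurable U)
    (hYval : ∀ ω, Y ω = 1 ∨ Y ω = -1) (hUval : ∀ ω, U ω = 0 ∨ U ω = 1)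
    (hY1 : μ {ω | Y ω = 1} = 1 / 2)
    (hU1 : μ {ω | U ω = 1 ∧ Y ω = -1} = ENNReal.ofReal (θ / 2))
    (hU0 : μ {ω | U ω = 1 ∧ Y ω = 1} = 0) (f : ℝ × ℝ → ℝ) :
    ∫ ω, f (Y ω, U ω) ∂μ = (f (1, 0) + f (-1, 0)) / 2 + θ / 2 * (f (-1, 1) - f (-1, 0)) := by
  set A := {ω | Y ω = 1}
  set B := {ω | U ω = 1 ∧ Y ω = -1}
  set D := {ω | U ω = 1 ∧ Y ω = 1}
  have hA : MeasurableSet A := hY (measurableSet_singleton 1)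
  have hB : MeasurableSet B :=
    (hU (measurableSet_singleton 1)).inter (hY (measurableSet_singleton _))
  have hD : MeasurableSet D := (hU (measurableSet_singleton 1)).inter hA
  have hdecomp : (fun ω => f (Y ω, U ω)) = (fun _ => f (-1, 0))
      + A.indicator (fun _ => f (1, 0) - f (-1, 0))
      + B.indicator (fun _ => f (-1, 1) - f (-1, 0))
      + D.indicator (fun _ => f (1, 1) - f (1, 0)) := by
    ext ω
    rcases hYval ω with hy | hy <;> rcases hUval ω with hu | hu <;>
      simp [A, B, D, Set.indicator, hy, hu, (by norm_num : (-1 : ℝ) ≠ 1),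
        (by norm_num : (1 : ℝ) ≠ -1)]
  have hint {S : Set Ω} (hS : MeasurableSet S) (c : ℝ) : Integrable (S.indicator fun _ => c) μ :=
    (integrable_const c).indicator hS
  rw [hdecomp, integral_add' ((integrable_const _).add (hint hA _) |>.add (hint hB _)) (hint hD _),
    integral_add' ((integrable_const _).add (hint hA _)) (hint hB _),
    integral_add' (integrable_const _) (hint hA _), integral_indicator_const _ hA,
    integral_indicator_const _ hB, integral_indicator_const _ hD, measureReal_def,
    measureReal_def, measureReal_def, hY1, hU1, hU0, ENNReal.toReal_ofReal (by positivity)]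
  simp only [integral_const, probReal_univ, smul_eq_mul, one_mul, one_div, ENNReal.toReal_inv,
    ENNReal.toReal_ofNat, ENNReal.toReal_zero, zero_mul, add_zero]
  ring

theorem ae_tendsto_inv_mul_sum_comp_label_indicator {θ : ℝ} (hθ : 0 ≤ θ)
    {y u : (n : ℕ) → Ω → Fin n → ℝ}
    (hymeas : ∀ n (i : Fin n), Measurable fun ω => y n ω i)
    (humeas : ∀ n (i : Fin n), Measurable fun ω => u n ω i)
    (hyval : ∀ n ω (i : Fin n), y n ω i = 1 ∨ y n ω i = -1)
    (huval : ∀ n ω (i : Fin n), u n ω i = 0 ∨ u n ω i = 1)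
    (hy1 : ∀ n (i : Fin n), μ {ω | y n ω i = 1} = 1 / 2)
    (hu1 : ∀ n (i : Fin n), μ {ω | u n ω i = 1 ∧ y n ω i = -1} = ENNReal.ofReal (θ / 2))
    (hu0 : ∀ n (i : Fin n), μ {ω | u n ω i = 1 ∧ y n ω i = 1} = 0)
    (hind : ∀ n, iIndepFun (fun i : Fin n => fun ω => (y n ω i, u n ω i)) μ)
    {f : ℝ × ℝ → ℝ} (hf : Measurable f) :
    ∀ᵐ ω ∂μ, Tendsto (fun n : ℕ => (n : ℝ)⁻¹ * ∑ i, f (y n ω i, u n ω i)) atTop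
      (𝓝 ((f (1, 0) + f (-1, 0)) / 2 + θ / 2 * (f (-1, 1) - f (-1, 0)))) := by
  set C := |f (1, 0)| + |f (1, 1)| + |f (-1, 0)| + |f (-1, 1)|
  refine ae_tendsto_inv_mul_sum_of_iIndepFun (X := fun n i ω => f (y n ω i, u n ω i))
    (a := -C) (b := C)
    (fun n => (hind n).comp (fun _ => f) fun _ => hf)
    (fun n i => (hf.comp ((hymeas n i).prodMk (humeas n i))).aemeasurable)
    (fun n i => ae_of_all _ fun ω => abs_le.1 ?_)
    (fun n i => integral_comp_label_indicator hθ (hymeas n i) (humeas n i) (hyval n · i)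
      (huval n · i) (hy1 n i) (hu1 n i) (hu0 n i) f)
  rcases hyval n ω i with hy | hy <;> rcases huval n ω i with hu | hu <;> rw [hy, hu] <;>
    linarith [abs_nonneg (f (1, 0)), abs_nonneg (f (1, 1)), abs_nonneg (f (-1, 0)),
      abs_nonneg (f (-1, 1))]

end

/-- in the label-and-indicator model with `θ ∈ (0,1)`, with
`r = u − (θ/2)𝟙` and `w̃ = y + 2r`, almost surely `(1/n)‖w̃‖² → 1 − θ²`, eventually
`‖r‖ > 0`, and `(1/n)(w̃ᵀr)²/‖r‖² → θ(1−θ)²/(2−θ)`. -/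
theorem label_indicator_llns_second_order {Ω : Type} [MeasureSpace Ω]
    [IsProbabilityMeasure (ℙ : Measure Ω)]
    (θ : ℝ) (hθ : θ ∈ Set.Ioo (0 : ℝ) 1)
    (y u : (n : ℕ) → Ω → Fin n → ℝ)
    (hymeas : ∀ n (i : Fin n), Measurable fun ω => y n ω i)
    (humeas : ∀ n (i : Fin n), Measurable fun ω => u n ω i)
    (hyval : ∀ n ω (i : Fin n), y n ω i = 1 ∨ y n ω i = -1)
    (huval : ∀ n ω (i : Fin n), u n ω i = 0 ∨ u n ω i = 1)
    (hy1 : ∀ n (i : Fin n), ℙ {ω | y n ω i = 1} = 1 / 2)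
    (hu1 : ∀ n (i : Fin n), ℙ {ω | u n ω i = 1 ∧ y n ω i = -1} = ENNReal.ofReal (θ / 2))
    (hu0 : ∀ n (i : Fin n), ℙ {ω | u n ω i = 1 ∧ y n ω i = 1} = 0)
    (hyuindep : ∀ n, iIndepFun
      (fun i : Fin n => fun ω => (y n ω i, u n ω i)) ℙ) :
    ∀ᵐ ω ∂ℙ,
      (Tendsto (fun n : ℕ => (n : ℝ)⁻¹ *
          ∑ i, (y n ω i + 2 * (u n ω i - θ / 2)) ^ 2) atTop (𝓝 (1 - θ ^ 2))) ∧
      (∀ᶠ n in atTop, 0 < ∑ i, (u n ω i - θ / 2) ^ 2) ∧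
      (Tendsto (fun n : ℕ => (n : ℝ)⁻¹ *
          (∑ i, (y n ω i + 2 * (u n ω i - θ / 2)) * (u n ω i - θ / 2)) ^ 2 /
            (∑ i, (u n ω i - θ / 2) ^ 2)) atTop
        (𝓝 (θ * (1 - θ) ^ 2 / (2 - θ)))) := by
  obtain ⟨hθ0, hθ1⟩ := hθ
  have hlim {f : ℝ × ℝ → ℝ} (hf : Measurable f) {L : ℝ}
      (hL : (f (1, 0) + f (-1, 0)) / 2 + θ / 2 * (f (-1, 1) - f (-1, 0)) = L) :
      ∀ᵐ ω ∂ℙ, Tendsto (fun n : ℕ => (n : ℝ)⁻¹ * ∑ i, f (y n ω i, u n ω i)) atTop (𝓝 L) :=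
    hL ▸ ae_tendsto_inv_mul_sum_comp_label_indicator hθ0.le hymeas humeas hyval huval hy1 hu1
      hu0 hyuindep hf
  filter_upwards [
    hlim (f := fun p => (p.1 + 2 * (p.2 - θ / 2)) ^ 2) (L := 1 - θ ^ 2) (by fun_prop) (by ring),
    hlim (f := fun p => (p.2 - θ / 2) ^ 2) (L := θ / 2 - θ ^ 2 / 4) (by fun_prop) (by ring),
    hlim (f := fun p => (p.1 + 2 * (p.2 - θ / 2)) * (p.2 - θ / 2)) (L := θ / 2 - θ ^ 2 / 2)
      (by fun_prop) (by ring)] with ω hw hr hwr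
  have hrpos : 0 < θ / 2 - θ ^ 2 / 4 := by nlinarith
  refine ⟨hw, ?_, ?_⟩
  · filter_upwards [hr.eventually (lt_mem_nhds hrpos)] with n hn
    exact pos_of_mul_pos_right hn (inv_nonneg.2 n.cast_nonneg)
  · convert tendsto_inv_mul_sq_div hwr hr hrpos.ne' using 2
    rw [div_eq_div_iff (by linarith) hrpos.ne']
    ring
end
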